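/- For every n ≥ 0 and every word v of length n over {a,b}, the minimal period of ψ(v) satisfies π(ψ(v)) ≤ π(ψ(v^(n))) = F_{n−1}, with equality exactly when v is one of v^(n), E(v^(n)), c(v^(n)), E(c(v^(n))). -/

import Mathlib

/-
Write `w = ψ(v)` and let `p x` be the minimal period of `w x`. By induction on `v`, `w` is a
palindrome of length `p a + p b - 2`, the periods `p a` and `p b` are coprime, and `w x` begins with
`P x̄ x` for a palindrome `P` of length `p x - 2`. Hence the longest palindromic suffix of `w x`
starts at position `p x - 1`, so `ψ(v x)` is `w x` followed by its reversed prefix of length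
`p x - 1`, and the minimal period of `ψ(v x) y` is `p x` for `y = x` and `p a + p b` for `y = x̄`.
Fine–Wilf then gives `π(ψ(v)) = min (p a) (p b)`.

So the pair (min, max) of the two periods evolves as `(m, M) ↦ (m or M, m + M)`. Hence
`min ≤ F_{n-1}` and `m + M ≤ F_{n+1}`; the sum is extremal exactly when consecutive letters of `v`
differ, and the minimum exactly when this holds for `v` or for `c(v)`.
-/

def palClosure (w : List Bool) : List Bool :=
  let k := Nat.find (p := fun k => (w.drop k).reverse = w.drop k)
    ⟨w.length, by simp⟩
  w.take k ++ w.drop k ++ (w.take k).reverse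

def psi (v : List Bool) : List Bool := v.foldl (fun w x => palClosure (w ++ [x])) []

def E (v : List Bool) : List Bool := v.map (!·)

def mu (x : Bool) (w : List Bool) : List Bool := w.flatMap (fun y => if y = x then [x] else [x, y])

def muW : List Bool → List Bool → List Bool
  | [], w => w
  | x :: v, w => mu x (muW v w)

def vN (n : ℕ) : List Bool := (List.range n).map (fun i => decide (i % 2 = 1))

def fibF : ℕ → ℕ
  | 0 => 1
  | 1 => 1
  | n + 2 => fibF (n + 1) + fibF n

def HasPeriod (w : List Bool) (p : ℕ) : Prop :=
  0 < p ∧ ∀ i j (hi : i < w.length) (hj : j < w.length),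
    i % p = j % p → w.get ⟨i, hi⟩ = w.get ⟨j, hj⟩

noncomputable def minPeriod (w : List Bool) : ℕ := sInf {p | HasPeriod w p}

def dOp : List Bool → List Bool
  | x :: y :: u => y :: x :: u
  | w => w

def cOp (v : List Bool) : List Bool := (dOp v.reverse).reverse

def contAux : List ℕ → ℕ
  | [] => 1
  | [a] => a
  | a :: b :: t => a * contAux (b :: t) + contAux t

theorem hasPeriod_iff_list_hasPeriod {w : List Bool} {p : ℕ} :
    HasPeriod w p ↔ 0 < p ∧ w.HasPeriod p := by
  rw [List.hasPeriod_iff_forall_getElem?_mod]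
  refine and_congr_right fun _ => ⟨fun h i hi => ?_, fun h i j hi hj hij => ?_⟩
  · have hi' : i % p < w.length := (Nat.mod_le i p).trans_lt hi
    rw [List.getElem?_eq_getElem hi, List.getElem?_eq_getElem hi']
    exact congrArg some (h i _ hi hi' (Nat.mod_mod i p).symm)
  · have : w[i]? = w[j]? := by rw [h i hi, hij, ← h j hj]
    simpa [List.getElem?_eq_getElem hi, List.getElem?_eq_getElem hj] using this

theorem minPeriod_eq {w : List Bool} {p : ℕ} (hp : 0 < p) (hw : w.HasPeriod p)
    (hmin : ∀ r, 0 < r → w.HasPeriod r → p ≤ r) : minPeriod w = p :=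
  IsLeast.csInf_eq ⟨hasPeriod_iff_list_hasPeriod.2 ⟨hp, hw⟩,
    fun r hr => hmin r (hasPeriod_iff_list_hasPeriod.1 hr).1 (hasPeriod_iff_list_hasPeriod.1 hr).2⟩

namespace List

variable {α : Type*}

theorem HasPeriod.of_dvd {w : List α} {p r : ℕ} (h : w.HasPeriod p) (hpr : p ∣ r) :
    w.HasPeriod r := by
  rw [hasPeriod_iff_forall_getElem?_mod] at h ⊢
  intro i hi
  rw [h i hi, h _ ((Nat.mod_le i r).trans_lt hi), Nat.mod_mod_of_dvd i hpr]

theorem HasPeriod.append_singleton {w : List α} {p : ℕ} {y : α} (h : w.HasPeriod p)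
    (hy : w[w.length - p]? = some y) : (w ++ [y]).HasPeriod p := by
  have hp : 0 < p := Nat.pos_of_ne_zero fun hp => by simp [hp] at hy
  rw [hasPeriod_iff_getElem?] at h ⊢
  intro i hi
  simp only [length_append, length_singleton] at hi
  by_cases hip : i + p < w.length
  · rw [getElem?_append_left (by omega), getElem?_append_left hip]
    exact h i (by omega)
  · rw [getElem?_append_left (by omega), getElem?_append_right (by omega),
      show i = w.length - p by omega, hy, show w.length - p + p - w.length = 0 by omega]
    rfl

theorem eq_of_hasPeriod_append_singleton {w : List α} {r : ℕ} {y z : α}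
    (hy : (w ++ [y]).HasPeriod r) (hz : (w ++ [z]).HasPeriod r) (hr : 0 < r)
    (hrw : r ≤ w.length) : y = z := by
  have hlast : ∀ x, (w ++ [x]).HasPeriod r → w[w.length - r]? = some x := by
    intro x hx
    rw [hasPeriod_iff_getElem?] at hx
    have := hx (w.length - r) (by simp; omega)
    rwa [getElem?_append_left (by omega), getElem?_append_right (by omega),
      show w.length - r + r - w.length = 0 by omega] at this
  simpa using (hlast y hy).symm.trans (hlast z hz)

theorem hasPeriod_of_prefix_of_suffix {s t : List α} (hpre : s <+: t) (hsuf : s <:+ t) :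
    t.HasPeriod (t.length - s.length) := by
  obtain ⟨r, rfl⟩ := hsuf
  rw [hasPeriod_iff_getElem?]
  simp only [length_append, Nat.add_sub_cancel]
  intro i hi
  rw [prefix_iff_getElem?.1 hpre i (by omega), getElem?_append_right (by omega),
    Nat.add_sub_cancel, getElem?_eq_getElem (by omega)]

theorem Palindrome.getElem?_eq {l : List α} (h : l.Palindrome) {i : ℕ} (hi : i < l.length) :
    l[i]? = l[l.length - 1 - i]? := by
  rw [← getElem?_reverse hi, h.reverse_eq]

theorem palindrome_iff_getElem? {l : List α} :
    l.Palindrome ↔ ∀ i < l.length, l[i]? = l[l.length - 1 - i]? := by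
  refine ⟨fun h i hi => h.getElem?_eq hi, fun h => Palindrome.of_reverse_eq ?_⟩
  refine ext_getElem? fun i => ?_
  by_cases hi : i < l.length
  · rw [getElem?_reverse hi, h i hi]
  · rw [getElem?_eq_none (by simpa using hi), getElem?_eq_none (by omega)]

theorem hasPeriod_of_palindrome_take_of_palindrome_drop {u : List α} {a d : ℕ} (hda : d ≤ a)
    (ha : a ≤ u.length) (htake : (u.take a).Palindrome) (hdrop : (u.drop d).Palindrome) :
    u.HasPeriod (u.length - a + d) := by
  rw [hasPeriod_iff_getElem?]
  intro i hi
  -- reflect `i` in the palindromic prefix, then in the palindromic suffix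
  have h1 := htake.getElem?_eq (i := i) (by simp; omega)
  have h2 := hdrop.getElem?_eq (i := a - 1 - i - d) (by simp; omega)
  simp only [getElem?_take, length_take, getElem?_drop, length_drop] at h1 h2
  rw [if_pos (by omega), if_pos (by omega), min_eq_left ha] at h1
  rw [show d + (a - 1 - i - d) = a - 1 - i by omega,
    show d + (u.length - d - 1 - (a - 1 - i - d)) = i + (u.length - a + d) by omega] at h2
  rw [h1, h2]

theorem Palindrome.append_reverse_take {u : List α} {k : ℕ} (hk : (u.drop k).Palindrome) :
    (u ++ (u.take k).reverse).Palindrome := by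
  have hu : u.reverse = u.drop k ++ (u.take k).reverse := by
    rw [← hk.reverse_eq, ← reverse_append, take_append_drop]
  refine Palindrome.of_reverse_eq ?_
  rw [reverse_append, reverse_reverse, hu, ← append_assoc, take_append_drop]

theorem isChain_append_singleton_iff {R : α → α → Prop} {l : List α} {a : α} :
    (l ++ [a]).IsChain R ↔ l.IsChain R ∧ ∀ b ∈ l.getLast?, R b a := by
  simp [isChain_append]

end List

theorem palClosure_palindrome (u : List Bool) : (palClosure u).Palindrome := by
  unfold palClosure
  dsimp only
  rw [List.take_append_drop]
  exact .append_reverse_take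
    (.of_reverse_eq (Nat.find_spec (p := fun k => (u.drop k).reverse = u.drop k) _))

theorem palClosure_eq {u : List Bool} {k : ℕ} (hk : (u.drop k).Palindrome)
    (hlt : ∀ j < k, ¬(u.drop j).Palindrome) : palClosure u = u ++ (u.take k).reverse := by
  have hfind : Nat.find (p := fun k => (u.drop k).reverse = u.drop k) ⟨u.length, by simp⟩ = k :=
    (Nat.find_eq_iff _).2 ⟨hk.reverse_eq, fun j hj h => hlt j hj (.of_reverse_eq h)⟩
  simp only [palClosure, hfind, List.take_append_drop]

theorem psi_append_singleton (v : List Bool) (x : Bool) :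
    psi (v ++ [x]) = palClosure (psi v ++ [x]) := by
  simp [psi, List.foldl_append]

def updatePeriods (p : Bool → ℕ) (x : Bool) : Bool → ℕ :=
  fun y => if y = x then p x else p x + p y

@[simp] theorem updatePeriods_self (p : Bool → ℕ) (x : Bool) : updatePeriods p x x = p x :=
  if_pos rfl

@[simp] theorem updatePeriods_not (p : Bool → ℕ) (x : Bool) :
    updatePeriods p x (!x) = p x + p (!x) :=
  if_neg (by cases x <;> decide)

-- `psiPeriod v x` is the minimal period of `psi v ++ [x]`.
def psiPeriod (v : List Bool) : Bool → ℕ :=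
  v.foldl updatePeriods fun _ => 1

theorem psiPeriod_append_singleton (v : List Bool) (x : Bool) :
    psiPeriod (v ++ [x]) = updatePeriods (psiPeriod v) x := by
  simp [psiPeriod, List.foldl_append]

/-- The invariants of `w = psi v` and `p = psiPeriod v`. The last two fields say that `w ++ [x]`
begins with `P ++ [!x, x]` for a palindrome `P` of length `p x - 2` (or with `x` if `p x = 1`). -/
structure IsCentralWith (w : List Bool) (p : Bool → ℕ) : Prop where
  palindrome : w.Palindrome
  pos : ∀ x, 0 < p x
  length_add_two : ∀ x, w.length + 2 = p x + p (!x)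
  coprime : ∀ x, (p x).Coprime (p (!x))
  hasPeriod : ∀ x, (w ++ [x]).HasPeriod (p x)
  le_of_hasPeriod : ∀ x r, 0 < r → (w ++ [x]).HasPeriod r → p x ≤ r
  reverse_take_append : ∀ x, (w.take (p x - 1)).reverse ++ [!x] = (!x) :: w.take (p x - 1)
  getElem?_sub_one : ∀ x, (w ++ [x])[p x - 1]? = some x

theorem isCentralWith_nil : IsCentralWith [] fun _ => 1 where
  palindrome := .nil
  pos _ := one_pos
  length_add_two _ := rfl
  coprime _ := Nat.coprime_one_left 1
  hasPeriod _ := List.hasPeriod_of_length_le _ _ le_rfl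
  le_of_hasPeriod _ _ hr _ := hr
  reverse_take_append _ := rfl
  getElem?_sub_one _ := rfl

namespace IsCentralWith

variable {w : List Bool} {p : Bool → ℕ}

theorem sub_one_le_length (h : IsCentralWith w p) (x : Bool) : p x - 1 ≤ w.length := by
  have := h.length_add_two x
  have := h.pos (!x)
  omega

theorem palindrome_drop (h : IsCentralWith w p) (x : Bool) :
    ((w ++ [x]).drop (p x - 1)).Palindrome := by
  have hlen := h.length_add_two x
  have hpos := h.pos x
  refine List.palindrome_iff_getElem?.2 fun t ht => ?_
  simp only [List.length_drop, List.length_append, List.length_singleton] at ht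
  simp only [List.getElem?_drop, List.length_drop, List.length_append, List.length_singleton]
  rw [show p x - 1 + (w.length + 1 - (p x - 1) - 1 - t) = w.length - t by omega]
  rcases Nat.eq_zero_or_pos t with rfl | ht0
  · rw [Nat.add_zero, h.getElem?_sub_one, Nat.sub_zero, List.getElem?_append_right le_rfl,
      Nat.sub_self]
    rfl
  -- shift back by the period `p x`, then reflect in the palindrome `w`
  rw [show p x - 1 + t = t - 1 + p x by omega,
    ← (List.hasPeriod_iff_getElem?.1 (h.hasPeriod x)) (t - 1) (by simp; omega),
    List.getElem?_append_left (by omega), List.getElem?_append_left (by omega),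
    h.palindrome.getElem?_eq (by omega)]
  congr 1
  omega

theorem not_palindrome_drop (h : IsCentralWith w p) (x : Bool) {j : ℕ} (hj : j < p x - 1) :
    ¬((w ++ [x]).drop j).Palindrome := by
  intro hpal
  have hper := List.hasPeriod_of_palindrome_take_of_palindrome_drop (u := w ++ [x])
    (a := w.length) (d := j) (by have := h.sub_one_le_length x; omega) (by simp)
    (by simpa using h.palindrome) hpal
  have := h.le_of_hasPeriod x _ (by simp) hper
  simp at this
  omega

theorem palClosure_eq (h : IsCentralWith w p) (x : Bool) :
    palClosure (w ++ [x]) = w ++ [x] ++ (w.take (p x - 1)).reverse := by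
  rw [_root_.palClosure_eq (h.palindrome_drop x) fun j hj => h.not_palindrome_drop x hj,
    List.take_append_of_le_length (h.sub_one_le_length x)]

theorem length_palClosure (h : IsCentralWith w p) (x : Bool) :
    (palClosure (w ++ [x])).length = w.length + p x := by
  have := h.sub_one_le_length x
  have := h.pos x
  rw [h.palClosure_eq]
  simp
  omega

theorem prefix_palClosure (h : IsCentralWith w p) (x : Bool) :
    w ++ [x] <+: palClosure (w ++ [x]) := by
  rw [h.palClosure_eq]
  exact List.prefix_append _ _

theorem palClosure_append_not_eq (h : IsCentralWith w p) (x : Bool) :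
    palClosure (w ++ [x]) ++ [!x] = w ++ [x] ++ (!x) :: w.take (p x - 1) := by
  rw [h.palClosure_eq, List.append_assoc, h.reverse_take_append]

theorem hasPeriod_palClosure (h : IsCentralWith w p) (x : Bool) :
    (palClosure (w ++ [x])).HasPeriod (p x) := by
  have htake : (palClosure (w ++ [x])).take w.length = w := by
    rw [h.palClosure_eq, List.append_assoc, List.take_left' rfl]
  have := List.hasPeriod_of_palindrome_take_of_palindrome_drop (u := palClosure (w ++ [x]))
    (a := w.length) (d := 0) (Nat.zero_le _) (by rw [h.length_palClosure]; omega)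
    (by rw [htake]; exact h.palindrome)
    (by simpa using palClosure_palindrome (w ++ [x]))
  rwa [h.length_palClosure, Nat.add_zero, Nat.add_sub_cancel_left] at this

theorem hasPeriod_palClosure_append_self (h : IsCentralWith w p) (x : Bool) :
    (palClosure (w ++ [x]) ++ [x]).HasPeriod (p x) := by
  refine (h.hasPeriod_palClosure x).append_singleton ?_
  rw [h.length_palClosure, Nat.add_sub_cancel, h.palClosure_eq, List.append_assoc,
    List.getElem?_append_right le_rfl, Nat.sub_self]
  rfl

theorem hasPeriod_palClosure_append_not (h : IsCentralWith w p) (x : Bool) :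
    (palClosure (w ++ [x]) ++ [!x]).HasPeriod (p x + p (!x)) := by
  have hlen := h.length_add_two x
  have := h.sub_one_le_length x
  have hborder := List.hasPeriod_of_prefix_of_suffix (s := w.take (p x - 1))
    (t := palClosure (w ++ [x]) ++ [!x])
    (by rw [h.palClosure_append_not_eq, List.append_assoc]
        exact (List.take_prefix _ _).trans (List.prefix_append _ _))
    (by rw [h.palClosure_append_not_eq]
        exact (List.suffix_cons _ _).trans (List.suffix_append _ _))
  convert hborder using 1
  rw [h.palClosure_append_not_eq]
  simp
  omega

theorem le_of_hasPeriod_palClosure_append_self (h : IsCentralWith w p) (x : Bool) {r : ℕ}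
    (hr : 0 < r) (hper : (palClosure (w ++ [x]) ++ [x]).HasPeriod r) : p x ≤ r :=
  h.le_of_hasPeriod x r hr
    (hper.infix ((h.prefix_palClosure x).trans (List.prefix_append _ _)).isInfix)

theorem le_of_hasPeriod_palClosure_append_not (h : IsCentralWith w p) (x : Bool) {r : ℕ}
    (hr : 0 < r) (hper : (palClosure (w ++ [x]) ++ [!x]).HasPeriod r) : p x + p (!x) ≤ r := by
  have hlen := h.length_add_two x
  have hC := h.length_palClosure x
  have hpos := h.pos x
  have hpr : p x ≤ r := h.le_of_hasPeriod x r hr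
    (hper.infix ((h.prefix_palClosure x).trans (List.prefix_append _ _)).isInfix)
  by_contra! hlt
  rcases Nat.lt_or_ge r (w.length + 1) with hrN | hrN
  · -- By Fine–Wilf, `gcd (p x) r` is a period of `w ++ [x]`, so `p x ∣ r`.
    have hg := (h.hasPeriod_palClosure x).gcd (hper.infix (List.prefix_append _ _).isInfix)
      (by rw [hC]; omega)
    have hdvd : p x ∣ r := by
      refine Nat.gcd_eq_left_iff_dvd.1 (le_antisymm (Nat.gcd_le_left _ (h.pos x)) ?_)
      exact h.le_of_hasPeriod x _ (Nat.gcd_pos_of_pos_left _ (h.pos x))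
        (hg.infix (h.prefix_palClosure x).isInfix)
    have := List.eq_of_hasPeriod_append_singleton
      ((h.hasPeriod_palClosure_append_self x).of_dvd hdvd) hper hr (by omega)
    simp at this
  · have hx : (palClosure (w ++ [x]) ++ [!x])[p x - 1]? = some x := by
      rw [h.palClosure_append_not_eq, List.getElem?_append_left (by simp; omega),
        h.getElem?_sub_one]
    have hnx : (palClosure (w ++ [x]) ++ [!x])[p x - 1 + r]? = some (!x) := by
      rw [show p x - 1 + r = (palClosure (w ++ [x])).length by omega,
        List.getElem?_append_right le_rfl, Nat.sub_self]
      rfl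
    have := (List.hasPeriod_iff_getElem?.1 hper) (p x - 1) (by simp; omega)
    rw [hx, hnx] at this
    simp at this

theorem palClosure_append_singleton (h : IsCentralWith w p) (x : Bool) :
    IsCentralWith (palClosure (w ++ [x])) (updatePeriods p x) where
  palindrome := palClosure_palindrome _
  pos y := by
    have := h.pos x
    rcases Bool.eq_or_eq_not y x with rfl | rfl <;> simp <;> omega
  length_add_two y := by
    have := h.length_add_two x
    rcases Bool.eq_or_eq_not y x with rfl | rfl <;> simp [h.length_palClosure] <;> omega
  coprime y := by
    have := h.coprime x
    rcases Bool.eq_or_eq_not y x with rfl | rfl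
    · simpa [add_comm (p y), Nat.coprime_add_self_right] using this
    · simpa [Nat.coprime_self_add_left] using this.symm
  hasPeriod y := by
    rcases Bool.eq_or_eq_not y x with rfl | rfl
    · simpa using h.hasPeriod_palClosure_append_self y
    · simpa using h.hasPeriod_palClosure_append_not x
  le_of_hasPeriod y r hr := by
    rcases Bool.eq_or_eq_not y x with rfl | rfl
    · simpa using h.le_of_hasPeriod_palClosure_append_self y hr
    · simpa using h.le_of_hasPeriod_palClosure_append_not x hr
  reverse_take_append y := by
    rcases Bool.eq_or_eq_not y x with rfl | rfl
    · rw [updatePeriods_self, h.palClosure_eq, List.append_assoc,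
        List.take_append_of_le_length (h.sub_one_le_length y), h.reverse_take_append]
    · have := h.length_add_two x
      rw [updatePeriods_not, h.palClosure_eq,
        show p x + p (!x) - 1 = (w ++ [x]).length by simp; omega, List.take_left,
        List.reverse_append, h.palindrome.reverse_eq]
      simp
  getElem?_sub_one y := by
    have := h.length_add_two x
    rcases Bool.eq_or_eq_not y x with rfl | rfl
    · have := h.sub_one_le_length y
      rw [updatePeriods_self, h.palClosure_eq, List.append_assoc (w ++ [y]),
        List.getElem?_append_left (by simp; omega), h.getElem?_sub_one]
    · rw [updatePeriods_not, h.palClosure_append_not_eq,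
        show p x + p (!x) - 1 = (w ++ [x]).length by simp; omega,
        List.getElem?_append_right le_rfl, Nat.sub_self]
      rfl

theorem hasPeriod_one_of_hasPeriod (h : IsCentralWith w p) {r : ℕ} (hr : 0 < r)
    (hrf : r < p false) (hrt : r < p true) (hw : w.HasPeriod r) : w.HasPeriod 1 := by
  have hlen : w.length + 2 = p false + p true := h.length_add_two false
  have hcop : (p false).Coprime (p true) := h.coprime false
  have hf := (h.hasPeriod false).infix (List.prefix_append _ _).isInfix
  have ht := (h.hasPeriod true).infix (List.prefix_append _ _).isInfix
  have hg₁ : w.HasPeriod (r.gcd (p false)) :=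
    hw.gcd hf (by have := Nat.gcd_pos_of_pos_left (p false) hr; omega)
  have hg₂ : w.HasPeriod ((r.gcd (p false)).gcd (p true)) := hg₁.gcd ht (by
    have := Nat.gcd_le_left (p false) hr
    have := Nat.gcd_pos_of_pos_left (p true) (Nat.gcd_pos_of_pos_left (p false) hr)
    omega)
  rwa [Nat.eq_one_of_dvd_coprimes hcop
    ((Nat.gcd_dvd_left _ _).trans (Nat.gcd_dvd_right _ _)) (Nat.gcd_dvd_right _ _)] at hg₂

theorem minPeriod_eq (h : IsCentralWith w p) : minPeriod w = min (p false) (p true) := by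
  refine _root_.minPeriod_eq (lt_min (h.pos _) (h.pos _)) ?_ fun r hr hw => ?_
  · rcases min_choice (p false) (p true) with hm | hm <;> rw [hm]
    exacts [(h.hasPeriod false).infix (List.prefix_append _ _).isInfix,
      (h.hasPeriod true).infix (List.prefix_append _ _).isInfix]
  by_contra! hlt
  rw [lt_min_iff] at hlt
  -- `w` is constant, so appending its letter `c` keeps period 1
  have h1 := h.hasPeriod_one_of_hasPeriod hr hlt.1 hlt.2 hw
  have hlen : w.length + 2 = p false + p true := h.length_add_two false
  obtain ⟨c, hc⟩ : ∃ c, w[w.length - 1]? = some c := ⟨_, List.getElem?_eq_getElem (by omega)⟩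
  have := h.le_of_hasPeriod c 1 one_pos (h1.append_singleton hc)
  cases c <;> omega

end IsCentralWith

theorem isCentralWith_psi (v : List Bool) : IsCentralWith (psi v) (psiPeriod v) := by
  induction v using List.reverseRecOn with
  | nil => exact isCentralWith_nil
  | append_singleton v x ih =>
    rw [psi_append_singleton, psiPeriod_append_singleton]
    exact ih.palClosure_append_singleton x

theorem fibF_pos : ∀ n, 0 < fibF n
  | 0 | 1 => Nat.one_pos
  | n + 2 => Nat.add_pos_left (fibF_pos (n + 1)) _

theorem psiPeriod_nil (x : Bool) : psiPeriod [] x = 1 := rfl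

theorem psiPeriod_append_self (v : List Bool) (x : Bool) :
    psiPeriod (v ++ [x]) x = psiPeriod v x := by
  rw [psiPeriod_append_singleton, updatePeriods_self]

theorem psiPeriod_add_not (v : List Bool) (x : Bool) :
    psiPeriod v x + psiPeriod v (!x) = psiPeriod v false + psiPeriod v true := by
  cases x <;> simp [add_comm]

theorem psiPeriod_append_not (v : List Bool) (x : Bool) :
    psiPeriod (v ++ [x]) (!x) = psiPeriod v false + psiPeriod v true := by
  rw [psiPeriod_append_singleton, updatePeriods_not, psiPeriod_add_not]

theorem psiPeriod_add_append (u : List Bool) (z : Bool) :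
    psiPeriod (u ++ [z]) false + psiPeriod (u ++ [z]) true =
      psiPeriod u z + (psiPeriod u false + psiPeriod u true) := by
  rw [← psiPeriod_add_not _ z, psiPeriod_append_self, psiPeriod_append_not]

theorem min_psiPeriod_append (u : List Bool) (z : Bool) :
    min (psiPeriod (u ++ [z]) false) (psiPeriod (u ++ [z]) true) = psiPeriod u z := by
  have hz := psiPeriod_append_self u z
  have hnz := psiPeriod_append_not u z
  cases z <;> simp only [Bool.not_false, Bool.not_true] at hnz <;> omega

theorem psiPeriod_le_fibF (v : List Bool) :
    (∀ x, psiPeriod v x ≤ fibF (v.length + 1)) ∧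
      psiPeriod v false + psiPeriod v true ≤ fibF (v.length + 2) := by
  induction v using List.reverseRecOn with
  | nil => exact ⟨fun _ => le_rfl, le_rfl⟩
  | append_singleton u z ih =>
    have hfib₁ : fibF (u.length + 1 + 1) = fibF (u.length + 1) + fibF u.length := rfl
    have hfib₂ : fibF (u.length + 1 + 2) = fibF (u.length + 2) + fibF (u.length + 1) := rfl
    have := fibF_pos u.length
    simp only [List.length_append, List.length_singleton]
    refine ⟨fun x => ?_, ?_⟩
    · rcases Bool.eq_or_eq_not x z with rfl | rfl
      · rw [psiPeriod_append_self]
        have := ih.1 x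
        omega
      · rw [psiPeriod_append_not]
        exact ih.2
    · rw [psiPeriod_add_append]
      have := ih.1 z
      have := ih.2
      omega

theorem psiPeriod_add_append_eq_fibF_iff (u : List Bool) (z : Bool) :
    psiPeriod (u ++ [z]) false + psiPeriod (u ++ [z]) true = fibF ((u ++ [z]).length + 2) ↔
      psiPeriod u z = fibF (u.length + 1) ∧
        psiPeriod u false + psiPeriod u true = fibF (u.length + 2) := by
  have := (psiPeriod_le_fibF u).1 z
  have := (psiPeriod_le_fibF u).2
  have hfib₂ : fibF (u.length + 1 + 2) = fibF (u.length + 2) + fibF (u.length + 1) := rfl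
  rw [psiPeriod_add_append, List.length_append, List.length_singleton]
  omega

theorem psiPeriod_append_eq_fibF_iff (u : List Bool) (z' z : Bool) :
    psiPeriod (u ++ [z']) z = fibF ((u ++ [z']).length + 1) ↔
      z' ≠ z ∧ psiPeriod u false + psiPeriod u true = fibF (u.length + 2) := by
  rw [List.length_append, List.length_singleton]
  rcases Bool.eq_or_eq_not z z' with rfl | rfl
  · have := (psiPeriod_le_fibF u).1 z
    have hfib₁ : fibF (u.length + 1 + 1) = fibF (u.length + 1) + fibF u.length := rfl
    have := fibF_pos u.length
    rw [psiPeriod_append_self]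
    simp only [ne_eq, not_true_eq_false, false_and, iff_false]
    omega
  · rw [psiPeriod_append_not]
    simp

theorem psiPeriod_add_eq_fibF_iff (v : List Bool) :
    psiPeriod v false + psiPeriod v true = fibF (v.length + 2) ↔ v.IsChain (· ≠ ·) := by
  induction v using List.reverseRecOn with
  | nil => simp [psiPeriod_nil, fibF]
  | append_singleton u z ih =>
    rw [psiPeriod_add_append_eq_fibF_iff, ih, List.isChain_append_singleton_iff]
    rcases List.eq_nil_or_concat' u with rfl | ⟨u', z', rfl⟩
    · simp [psiPeriod_nil, fibF]
    rw [psiPeriod_append_eq_fibF_iff]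
    simp only [List.getLast?_append, List.getLast?_singleton, Option.some_or, Option.mem_def,
      Option.some.injEq, forall_eq']
    constructor
    · rintro ⟨⟨hz, -⟩, hc⟩
      exact ⟨hc, hz⟩
    · rintro ⟨hc, hz⟩
      exact ⟨⟨hz, ((psiPeriod_add_append_eq_fibF_iff u' z').1 (ih.2 hc)).2⟩, hc⟩

theorem length_vN (n : ℕ) : (vN n).length = n := by
  simp [vN]

theorem isChain_vN (n : ℕ) : (vN n).IsChain (· ≠ ·) := by
  simp only [vN, List.isChain_map, List.isChain_range]
  intro m _
  simp
  omega

theorem isChain_E_iff {v : List Bool} : (E v).IsChain (· ≠ ·) ↔ v.IsChain (· ≠ ·) := by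
  simp [E, List.isChain_map]

theorem eq_of_isChain_ne : ∀ {l₁ l₂ : List Bool}, l₁.IsChain (· ≠ ·) → l₂.IsChain (· ≠ ·) →
    l₁.length = l₂.length → l₁.head? = l₂.head? → l₁ = l₂
  | [], [], _, _, _, _ => rfl
  | a :: t₁, b :: t₂, h₁, h₂, hlen, hhead => by
    simp only [List.head?_cons, Option.some.injEq, List.length_cons, Nat.add_right_cancel_iff]
      at hhead hlen
    subst hhead
    rw [List.isChain_cons] at h₁ h₂
    refine congrArg _ (eq_of_isChain_ne h₁.2 h₂.2 hlen ?_)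
    -- in a `Bool` chain the letter after `a` can only be `!a`
    rcases t₁ with _ | ⟨c₁, _⟩ <;> rcases t₂ with _ | ⟨c₂, _⟩ <;> simp at hlen
    · rfl
    · simp only [List.head?_cons, Option.mem_def, Option.some.injEq, forall_eq'] at h₁ h₂ ⊢
      cases a <;> cases c₁ <;> cases c₂ <;> simp_all

theorem isChain_ne_iff (v : List Bool) :
    v.IsChain (· ≠ ·) ↔ v = vN v.length ∨ v = E (vN v.length) := by
  refine ⟨fun hv => ?_, ?_⟩
  · rcases v with _ | ⟨_ | _, t⟩
    · exact Or.inl rfl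
    · exact Or.inl (eq_of_isChain_ne hv (isChain_vN _) (length_vN _).symm
        (by simp [vN, List.range_succ_eq_map]))
    · exact Or.inr (eq_of_isChain_ne hv (isChain_E_iff.2 (isChain_vN _)) (by simp [E, length_vN])
        (by simp [vN, E, List.range_succ_eq_map]))
  · rintro (h | h) <;> rw [h]
    exacts [isChain_vN _, isChain_E_iff.2 (isChain_vN _)]

theorem cOp_cOp (v : List Bool) : cOp (cOp v) = v := by
  have : ∀ l, dOp (dOp l) = l := by rintro (_ | ⟨a, _ | ⟨b, l⟩⟩) <;> rfl
  simp [cOp, this]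

theorem length_cOp (v : List Bool) : (cOp v).length = v.length := by
  have : ∀ l, (dOp l).length = l.length := by rintro (_ | ⟨a, _ | ⟨b, l⟩⟩) <;> rfl
  simp [cOp, this]

theorem E_cOp (v : List Bool) : E (cOp v) = cOp (E v) := by
  have : ∀ l, (dOp l).map (!·) = dOp (l.map (!·)) := by rintro (_ | ⟨a, _ | ⟨b, l⟩⟩) <;> rfl
  simp [E, cOp, this]

theorem cOp_append_pair (l : List Bool) (a b : Bool) : cOp (l ++ [a, b]) = l ++ [b, a] := by
  simp [cOp, dOp]

theorem isChain_ne_or_cOp_iff (v : List Bool) :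
    v.IsChain (· ≠ ·) ∨ (cOp v).IsChain (· ≠ ·) ↔
      v = vN v.length ∨ v = E (vN v.length) ∨ v = cOp (vN v.length) ∨
        v = E (cOp (vN v.length)) := by
  have hinv : Function.Involutive cOp := cOp_cOp
  rw [isChain_ne_iff, isChain_ne_iff (cOp v), length_cOp, or_assoc, hinv.eq_iff, hinv.eq_iff,
    ← E_cOp]

theorem isChain_ne_append_pair_or_swap (l : List Bool) (a b : Bool) :
    (l ++ [a, b]).IsChain (· ≠ ·) ∨ (l ++ [b, a]).IsChain (· ≠ ·) ↔
      a ≠ b ∧ l.IsChain (· ≠ ·) := by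
  simp only [List.isChain_append]
  rcases l.getLast? with _ | c <;> cases a <;> cases b <;> (try cases c) <;> simp

theorem min_psiPeriod_le_fibF (v : List Bool) :
    min (psiPeriod v false) (psiPeriod v true) ≤ fibF v.length := by
  rcases List.eq_nil_or_concat' v with rfl | ⟨u, z, rfl⟩
  · exact min_le_left _ _
  · rw [min_psiPeriod_append]
    simpa using (psiPeriod_le_fibF u).1 z

theorem min_psiPeriod_eq_fibF_iff (v : List Bool) :
    min (psiPeriod v false) (psiPeriod v true) = fibF v.length ↔
      v.IsChain (· ≠ ·) ∨ (cOp v).IsChain (· ≠ ·) := by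
  rcases List.eq_nil_or_concat' v with rfl | ⟨u, z, rfl⟩
  · simp [psiPeriod_nil, fibF]
  rw [min_psiPeriod_append]
  rcases List.eq_nil_or_concat' u with rfl | ⟨u', z', rfl⟩
  · simp [psiPeriod_nil, fibF, cOp, dOp]
  rw [List.length_append, List.length_singleton, psiPeriod_append_eq_fibF_iff,
    psiPeriod_add_eq_fibF_iff, List.append_assoc, List.singleton_append, cOp_append_pair,
    isChain_ne_append_pair_or_swap]

theorem stmt12 (n : ℕ) (v : List Bool) (hv : v.length = n) :
    minPeriod (psi v) ≤ minPeriod (psi (vN n)) ∧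
    minPeriod (psi (vN n)) = fibF n ∧
    (minPeriod (psi v) = minPeriod (psi (vN n)) ↔
      v = vN n ∨ v = E (vN n) ∨ v = cOp (vN n) ∨ v = E (cOp (vN n))) := by
  have hmin (u : List Bool) : minPeriod (psi u) = min (psiPeriod u false) (psiPeriod u true) :=
    (isCentralWith_psi u).minPeriod_eq
  have hvN : minPeriod (psi (vN n)) = fibF n := by
    have := (min_psiPeriod_eq_fibF_iff (vN n)).2 (Or.inl (isChain_vN n))
    rwa [length_vN, ← hmin] at this
  refine ⟨?_, hvN, ?_⟩
  · rw [hvN, hmin, ← hv]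
    exact min_psiPeriod_le_fibF v
  · rw [hvN, hmin, ← hv, min_psiPeriod_eq_fibF_iff, isChain_ne_or_cOp_iff]
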